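/- Let G be a finite connected simple graph on n ≥ 2 vertices with adjacency matrix A_G, all degrees d_i > 0, normalized adjacency Â = D^{-1/2} A_G D^{-1/2}, and normalized Laplacian Δ = I − Â with eigenvalues 0 = λ₀ ≤ λ₁ ≤ … ≤ λ_{n−1}. Let W ∈ ℝ^{d×d} be symmetric with eigenvalues μ₀ ≤ μ₁ ≤ … ≤ μ_{d−1}, and suppose |μ₀| (λ_{n−1} − 1) > μ_{d−1}. Then for (Lebesgue) almost every initial condition F₀ ∈ ℝ^{n×d} with F₀ ≠ 0, the solution F : [0, ∞) → ℝ^{n×d} of the linear matrix ODE Ḟ(t) = Â F(t) W with F(0) = F₀ satisfies: F(t) ≠ 0 for all t, and the normalized Dirichlet energy trace(F(t)ᵀ Δ F(t)) / ‖F(t)‖_F² converges to λ_{n−1} as t → ∞ (i.e., the dynamics is High-Frequency-Dominant). -/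

import Mathlib

/-!
In the coordinates `C = Qᵀ F P` the dynamics decouples into the scalar equations
`Ċᵢⱼ = (1 - λᵢ) μⱼ Cᵢⱼ`, while the Dirichlet energy becomes the weighted average
`∑ λᵢ Cᵢⱼ² / ∑ Cᵢⱼ²`. Since `tr Δ = n` and `1 + Â` is positive semidefinite, `1 < λ_{n-1} ≤ 2`;
under the hypothesis this makes `(1 - λ_{n-1}) μ₀` the largest growth rate, attained only by modes
with `λᵢ = λ_{n-1}`. So as soon as the mode `(n-1, 0)` of `F₀` is nonzero, which fails only on a
hyperplane, the energy concentrates on `λ_{n-1}`.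
-/

open Matrix MeasureTheory Filter Topology

attribute [local instance] Matrix.normedAddCommGroup Matrix.normedSpace

theorem eq_exp_mul_of_hasDerivWithinAt_Ici {y : ℝ → ℝ} {a : ℝ}
    (hy : ∀ t, 0 ≤ t → HasDerivWithinAt y (a * y t) (Set.Ici 0) t) {t : ℝ} (ht : 0 ≤ t) :
    y t = Real.exp (a * t) * y 0 := by
  have hderiv : ∀ s, 0 ≤ s →
      HasDerivWithinAt (fun s => Real.exp (-a * s) * y s) 0 (Set.Ici 0) s := by
    intro s hs
    have hexp : HasDerivWithinAt (fun s => Real.exp (-a * s)) (Real.exp (-a * s) * -a)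
        (Set.Ici 0) s := by
      simpa using ((hasDerivAt_id s).const_mul (-a)).exp.hasDerivWithinAt
    have h := hexp.fun_mul (hy s hs)
    rwa [show Real.exp (-a * s) * -a * y s + Real.exp (-a * s) * (a * y s) = 0 by ring] at h
  have hconst := constant_of_has_deriv_right_zero (a := 0) (b := t)
    (fun s hs => (hderiv s hs.1).continuousWithinAt.mono Set.Icc_subset_Ici_self)
    (fun s hs => (hderiv s hs.1).mono (Set.Ici_subset_Ici.mpr hs.1)) t ⟨ht, le_rfl⟩
  simp only [mul_zero, Real.exp_zero, one_mul] at hconst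
  rw [← hconst, ← mul_assoc, ← Real.exp_add]
  simp

theorem HasDerivWithinAt.matrix_mul_mul {m n p q : Type*} [Fintype m] [Fintype n]
    [Fintype p] [Fintype q]
    {F : ℝ → Matrix n p ℝ} {F' : Matrix n p ℝ} {s : Set ℝ} {t : ℝ}
    (hF : HasDerivWithinAt F F' s t) (A : Matrix m n ℝ) (B : Matrix p q ℝ) :
    HasDerivWithinAt (fun t => A * F t * B) (A * F' * B) s t :=
  (((mulRightLinearMap m ℝ B).comp (mulLeftLinearMap p ℝ A)).toContinuousLinearMap
    |>.hasFDerivAt).comp_hasDerivWithinAt t hF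

theorem mul_mul_apply_eq_exp_of_hasDerivWithinAt {k m n l : Type*} [Fintype k] [Fintype m]
    [Fintype n] [Fintype l] [DecidableEq k] [DecidableEq l]
    {A : Matrix m m ℝ} {W : Matrix n n ℝ} {L : Matrix k m ℝ} {R : Matrix n l ℝ}
    {a : k → ℝ} {b : l → ℝ} (hL : L * A = diagonal a * L) (hR : W * R = R * diagonal b)
    {F : ℝ → Matrix m n ℝ}
    (hF : ∀ t, 0 ≤ t → HasDerivWithinAt F (A * F t * W) (Set.Ici 0) t)
    {t : ℝ} (ht : 0 ≤ t) (i : k) (j : l) :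
    (L * F t * R) i j = Real.exp (a i * b j * t) * (L * F 0 * R) i j := by
  refine eq_exp_mul_of_hasDerivWithinAt_Ici (y := fun t => (L * F t * R) i j) (fun s hs => ?_) ht
  have hC := (hF s hs).matrix_mul_mul L R
  have hC' : L * (A * F s * W) * R = diagonal a * (L * F s * R) * diagonal b := by
    simp only [← Matrix.mul_assoc, hL]
    simp only [Matrix.mul_assoc, hR]
  rw [hC'] at hC
  have hij := (hasDerivWithinAt_pi.mp (hasDerivWithinAt_pi.mp hC i)) j
  rwa [mul_diagonal, diagonal_mul, mul_right_comm] at hij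

theorem trace_transpose_mul_diagonal_mul {m n : Type*} [Fintype m] [Fintype n] [DecidableEq m]
    (w : m → ℝ) (X : Matrix m n ℝ) :
    (Xᵀ * diagonal w * X).trace = ∑ i, ∑ j, w i * X i j ^ 2 := by
  simp only [Matrix.trace, diag, mul_apply, diagonal_apply, transpose_apply, mul_ite, mul_zero,
    Finset.sum_ite_eq', Finset.mem_univ, if_true]
  rw [Finset.sum_comm]
  exact Finset.sum_congr rfl fun i _ => Finset.sum_congr rfl fun j _ => by ring

theorem trace_transpose_mul_conj_diagonal_mul {m n : Type*} [Fintype m] [Fintype n]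
    [DecidableEq m] [DecidableEq n] {P : Matrix n n ℝ} (hP : P * Pᵀ = 1)
    (Q : Matrix m m ℝ) (w : m → ℝ) (F : Matrix m n ℝ) :
    (Fᵀ * (Q * diagonal w * Qᵀ) * F).trace = ∑ i, ∑ j, w i * (Qᵀ * F * P) i j ^ 2 := by
  have hconj : (Qᵀ * F * P)ᵀ * diagonal w * (Qᵀ * F * P)
      = Pᵀ * (Fᵀ * (Q * diagonal w * Qᵀ) * F * P) := by
    simp only [transpose_mul, transpose_transpose, Matrix.mul_assoc]
  rw [← trace_transpose_mul_diagonal_mul, hconj, trace_mul_comm Pᵀ, Matrix.mul_assoc _ P, hP,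
    Matrix.mul_one]

theorem sum_sq_transpose_mul_mul {m n : Type*} [Fintype m] [Fintype n] [DecidableEq m]
    [DecidableEq n] {Q : Matrix m m ℝ} {P : Matrix n n ℝ} (hQ : Q * Qᵀ = 1) (hP : P * Pᵀ = 1)
    (F : Matrix m n ℝ) : ∑ i, ∑ j, (Qᵀ * F * P) i j ^ 2 = ∑ i, ∑ j, F i j ^ 2 := by
  have hC := trace_transpose_mul_conj_diagonal_mul hP Q (fun _ => 1) F
  have hF := trace_transpose_mul_diagonal_mul (fun _ => (1 : ℝ)) F
  rw [diagonal_one, Matrix.mul_one, hQ] at hC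
  rw [diagonal_one, Matrix.mul_one] at hF
  simpa [hF] using hC.symm

theorem dotProduct_row_self_eq_one {m : Type*} [Fintype m] [DecidableEq m] {Q : Matrix m m ℝ}
    (hQ : Qᵀ * Q = 1) (i : m) : Qᵀ i ⬝ᵥ Qᵀ i = 1 := by
  simpa [mul_apply, dotProduct] using congrFun (congrFun hQ i) i

theorem eq_dotProduct_mulVec_of_eq_conj_diagonal {m : Type*} [Fintype m] [DecidableEq m]
    {Q M : Matrix m m ℝ} {w : m → ℝ} (hQ : Qᵀ * Q = 1) (hM : M = Q * diagonal w * Qᵀ) (i : m) :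
    w i = Qᵀ i ⬝ᵥ (M *ᵥ Qᵀ i) := by
  have hdiag : Qᵀ * M * Q = diagonal w := by
    rw [hM, ← Matrix.mul_assoc, ← Matrix.mul_assoc, hQ, Matrix.one_mul, Matrix.mul_assoc, hQ,
      Matrix.mul_one]
  rw [← diagonal_apply_eq w i, ← hdiag, mul_mul_apply]

theorem transpose_mul_one_sub_eq_diagonal_mul_transpose {m : Type*} [Fintype m] [DecidableEq m]
    {Q M : Matrix m m ℝ} {w : m → ℝ} (hQ : Qᵀ * Q = 1) (hM : M = Q * diagonal w * Qᵀ) :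
    Qᵀ * (1 - M) = diagonal (fun i => 1 - w i) * Qᵀ := by
  rw [hM, Matrix.mul_sub, Matrix.mul_one, ← Matrix.mul_assoc, ← Matrix.mul_assoc, hQ,
    Matrix.one_mul]
  ext i j
  simp [sub_mul]

theorem one_lt_of_sum_eq_card {ι : Type*} [Fintype ι] {w : ι → ℝ} {i₀ k : ι}
    (hsum : ∑ i, w i = Fintype.card ι) (hi₀ : w i₀ = 0) (hk : ∀ i, w i ≤ w k) : 1 < w k := by
  classical
  by_contra! hle
  have hbound : ∑ i ∈ Finset.univ.erase i₀, w i ≤ ∑ i ∈ Finset.univ.erase i₀, 1 :=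
    Finset.sum_le_sum fun i _ => (hk i).trans hle
  have hcard := Finset.card_erase_add_one (Finset.mem_univ i₀)
  rw [Finset.sum_erase _ hi₀, hsum, Finset.sum_const, nsmul_one] at hbound
  rw [Finset.card_univ] at hcard
  have : ((Finset.univ.erase i₀).card : ℝ) + 1 = Fintype.card ι := by exact_mod_cast hcard
  linarith

theorem one_sub_mul_le_of_abs_mul_sub_one_gt {l lmax m m₀ mmax : ℝ} (hl₀ : 0 ≤ l)
    (hl : l ≤ lmax) (hlmax₁ : 1 < lmax) (hlmax₂ : lmax ≤ 2) (hm₀ : m₀ ≤ m) (hm : m ≤ mmax)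
    (hcond : |m₀| * (lmax - 1) > mmax) :
    (1 - l) * m ≤ (1 - lmax) * m₀ ∧ ((1 - l) * m = (1 - lmax) * m₀ → l = lmax) := by
  have hm₀_neg : m₀ < 0 := by
    by_contra! h
    rw [abs_of_nonneg h] at hcond
    nlinarith
  rw [abs_of_neg hm₀_neg] at hcond
  rcases le_or_gt 0 m with hm_nonneg | hm_neg
  · constructor <;> [skip; intro h] <;> nlinarith
  rcases le_or_gt l 1 with hl₁ | hl₁
  · constructor <;> [skip; intro h] <;> nlinarith
  · refine ⟨by nlinarith, fun h => ?_⟩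
    by_contra hne
    have : l < lmax := lt_of_le_of_ne hl hne
    nlinarith

namespace SimpleGraph

variable {V : Type*} [Fintype V] (G : SimpleGraph V) [DecidableRel G.Adj]

/-- The signless Laplacian `D + A` is positive semidefinite. -/
theorem neg_sum_degree_mul_sq_le_dotProduct_adjMatrix_mulVec (y : V → ℝ) :
    -∑ i, (G.degree i : ℝ) * y i ^ 2 ≤ y ⬝ᵥ (G.adjMatrix ℝ *ᵥ y) := by
  have hrow : ∀ i, ∑ j, G.adjMatrix ℝ i j * y i ^ 2 = G.degree i * y i ^ 2 := fun i => by
    rw [← Finset.sum_mul]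
    simp [adjMatrix_apply, Finset.sum_boole, degree, neighborFinset_eq_filter]
  have hcol : ∑ i, ∑ j, G.adjMatrix ℝ i j * y j ^ 2 = ∑ i, ∑ j, G.adjMatrix ℝ i j * y i ^ 2 := by
    rw [Finset.sum_comm]
    simp only [G.isSymm_adjMatrix.apply]
  have hsq : 0 ≤ ∑ i, ∑ j, G.adjMatrix ℝ i j * (y i + y j) ^ 2 :=
    Finset.sum_nonneg fun i _ => Finset.sum_nonneg fun j _ => by
      rw [adjMatrix_apply]; split_ifs <;> positivity
  have hexpand : ∑ i, ∑ j, G.adjMatrix ℝ i j * (y i + y j) ^ 2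
      = ∑ i, ∑ j, G.adjMatrix ℝ i j * y i ^ 2 + ∑ i, ∑ j, G.adjMatrix ℝ i j * y j ^ 2
        + 2 * (y ⬝ᵥ (G.adjMatrix ℝ *ᵥ y)) := by
    simp only [dotProduct, mulVec, Finset.mul_sum, ← Finset.sum_add_distrib]
    exact Finset.sum_congr rfl fun i _ => Finset.sum_congr rfl fun j _ => by ring
  rw [hcol, Finset.sum_congr rfl fun i _ => hrow i] at hexpand
  linarith

variable [DecidableEq V]

noncomputable def normalizedAdjMatrix : Matrix V V ℝ :=
  diagonal (fun i => (√(G.degree i))⁻¹) * G.adjMatrix ℝ * diagonal (fun i => (√(G.degree i))⁻¹)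

theorem normalizedAdjMatrix_apply (i j : V) :
    G.normalizedAdjMatrix i j = (√(G.degree i))⁻¹ * G.adjMatrix ℝ i j * (√(G.degree j))⁻¹ := by
  rw [normalizedAdjMatrix, mul_diagonal, diagonal_mul]

theorem trace_normalizedAdjMatrix : G.normalizedAdjMatrix.trace = 0 := by
  simp [Matrix.trace, normalizedAdjMatrix_apply]

theorem neg_dotProduct_self_le_dotProduct_normalizedAdjMatrix_mulVec (x : V → ℝ) :
    -(x ⬝ᵥ x) ≤ x ⬝ᵥ (G.normalizedAdjMatrix *ᵥ x) := by
  set y : V → ℝ := fun i => (√(G.degree i))⁻¹ * x i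
  have hy : x ⬝ᵥ (G.normalizedAdjMatrix *ᵥ x) = y ⬝ᵥ (G.adjMatrix ℝ *ᵥ y) := by
    simp only [dotProduct, mulVec, normalizedAdjMatrix_apply, y, Finset.mul_sum]
    exact Finset.sum_congr rfl fun i _ => Finset.sum_congr rfl fun j _ => by ring
  have hdeg : ∀ i, (G.degree i : ℝ) * y i ^ 2 ≤ x i * x i := fun i => by
    rcases (Nat.cast_nonneg (α := ℝ) (G.degree i)).eq_or_lt with h | h
    · simp [y, ← h, mul_self_nonneg]
    · simp only [y, mul_pow, inv_pow, Real.sq_sqrt h.le, ← mul_assoc, mul_inv_cancel₀ h.ne']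
      nlinarith
  have hsum : ∑ i, (G.degree i : ℝ) * y i ^ 2 ≤ x ⬝ᵥ x := Finset.sum_le_sum fun i _ => hdeg i
  linarith [G.neg_sum_degree_mul_sq_le_dotProduct_adjMatrix_mulVec y]

theorem eigenvalue_le_two_of_one_sub_normalizedAdjMatrix_eq {Q : Matrix V V ℝ} {w : V → ℝ}
    (hQ : Qᵀ * Q = 1) (hΔ : 1 - G.normalizedAdjMatrix = Q * diagonal w * Qᵀ) (i : V) :
    w i ≤ 2 := by
  rw [eq_dotProduct_mulVec_of_eq_conj_diagonal hQ hΔ i, sub_mulVec, one_mulVec, dotProduct_sub,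
    dotProduct_row_self_eq_one hQ]
  linarith [G.neg_dotProduct_self_le_dotProduct_normalizedAdjMatrix_mulVec (Qᵀ i),
    dotProduct_row_self_eq_one hQ i]

theorem one_lt_eigenvalue_of_one_sub_normalizedAdjMatrix_eq {Q : Matrix V V ℝ} {w : V → ℝ}
    (hQ : Qᵀ * Q = 1) (hΔ : 1 - G.normalizedAdjMatrix = Q * diagonal w * Qᵀ) {i₀ k : V}
    (hi₀ : w i₀ = 0) (hk : ∀ i, w i ≤ w k) : 1 < w k := by
  refine one_lt_of_sum_eq_card ?_ hi₀ hk
  rw [← trace_diagonal, ← Matrix.mul_one (diagonal w), ← hQ, ← Matrix.mul_assoc, trace_mul_cycle,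
    ← hΔ, trace_sub, trace_normalizedAdjMatrix, trace_one, sub_zero]

end SimpleGraph

theorem ae_ne_zero_of_linearMap_ne_zero {E : Type*} [NormedAddCommGroup E] [NormedSpace ℝ E]
    [MeasurableSpace E] [BorelSpace E] [FiniteDimensional ℝ E] (μ : Measure E)
    [μ.IsAddHaarMeasure] {φ : E →ₗ[ℝ] ℝ} (hφ : φ ≠ 0) : ∀ᵐ x ∂μ, φ x ≠ 0 := by
  have hker : μ (LinearMap.ker φ) = 0 :=
    Measure.addHaar_submodule μ _ (mt LinearMap.ker_eq_top.mp hφ)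
  filter_upwards [measure_eq_zero_iff_ae_notMem.mp hker] with x hx
  simpa using hx

theorem ae_transpose_mul_of_mul_apply_ne_zero {m n : Type*} [Fintype m] [Fintype n]
    [DecidableEq m] [DecidableEq n] {Q : Matrix m m ℝ} {P : Matrix n n ℝ}
    (hQ : Qᵀ * Q = 1) (hP : Pᵀ * P = 1) (i : m) (j : n) :
    ∀ᵐ f : m → n → ℝ, (Qᵀ * Matrix.of f * P) i j ≠ 0 := by
  let φ := entryLinearMap ℝ ℝ i j ∘ₗ mulRightLinearMap m ℝ P ∘ₗ mulLeftLinearMap n ℝ Qᵀ ∘ₗ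
    (ofLinearEquiv ℝ).toLinearMap
  refine ae_ne_zero_of_linearMap_ne_zero (φ := φ) volume fun h => ?_
  have hφ : φ (of.symm (Q * single i j (1 : ℝ) * Pᵀ)) = 0 := by rw [h]; rfl
  change (Qᵀ * of (of.symm (Q * single i j (1 : ℝ) * Pᵀ)) * P) i j = 0 at hφ
  rw [Equiv.apply_symm_apply, ← Matrix.mul_assoc, ← Matrix.mul_assoc, hQ, Matrix.one_mul,
    Matrix.mul_assoc, hP, Matrix.mul_one, single_apply_same] at hφ
  exact one_ne_zero hφ

theorem tendsto_sum_mul_sq_exp_div_sum_sq_exp {ι : Type*} [Fintype ι] {a c w : ι → ℝ} {k : ι}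
    (hk : c k ≠ 0) (hmax : ∀ l, a l ≤ a k) (hw : ∀ l, a l = a k → w l = w k) :
    Tendsto (fun t => (∑ l, w l * (Real.exp (a l * t) * c l) ^ 2) /
      ∑ l, (Real.exp (a l * t) * c l) ^ 2) atTop (𝓝 (w k)) := by
  let x : ι → ℝ → ℝ := fun l t => c l ^ 2 * Real.exp (2 * (a l - a k) * t)
  let xlim : ι → ℝ := fun l => if a l = a k then c l ^ 2 else 0
  have hx : ∀ l, Tendsto (x l) atTop (𝓝 (xlim l)) := by
    intro l
    by_cases hl : a l = a k
    · simp [x, xlim, hl]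
    · have hneg : 2 * (a l - a k) < 0 := by linarith [lt_of_le_of_ne (hmax l) hl]
      have := (Real.tendsto_exp_atBot.comp
        (tendsto_id.const_mul_atTop_of_neg hneg)).const_mul (c l ^ 2)
      simpa [x, xlim, hl, Function.comp_def] using this
  have hrescale : ∀ l t, (Real.exp (a l * t) * c l) ^ 2 = Real.exp (2 * a k * t) * x l t := by
    intro l t
    have hexponent : a l * t + a l * t = 2 * a k * t + 2 * (a l - a k) * t := by ring
    rw [mul_pow, sq (Real.exp _), ← Real.exp_add, hexponent, Real.exp_add]
    ring
  have hlimit_pos : 0 < ∑ l, xlim l := by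
    refine lt_of_lt_of_le ?_ (Finset.single_le_sum (fun l _ => ?_) (Finset.mem_univ k))
    · simp only [xlim, if_pos rfl]; positivity
    · simp only [xlim]; split_ifs <;> positivity
  have hweighted : ∑ l, w l * xlim l = w k * ∑ l, xlim l := by
    rw [Finset.mul_sum]
    refine Finset.sum_congr rfl fun l _ => ?_
    by_cases hl : a l = a k <;> simp [xlim, hl, hw l]
  have hlim := (tendsto_finsetSum Finset.univ fun l _ => (hx l).const_mul (w l)).div
    (tendsto_finsetSum _ fun l _ => hx l) hlimit_pos.ne'
  rw [hweighted, mul_div_cancel_right₀ _ hlimit_pos.ne'] at hlim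
  refine hlim.congr fun t => ?_
  simp only [hrescale, mul_left_comm (w _), ← Finset.mul_sum]
  exact (mul_div_mul_left _ _ (Real.exp_ne_zero _)).symm

/-- **High-Frequency-Dominant dynamics (Theorem 4.3 of Di Giovanni et al., HFD case).**
Let `G` be a connected finite simple graph on `n ≥ 2` vertices with positive degrees,
normalized adjacency `Â = D^{-1/2} A D^{-1/2}` and normalized Laplacian `Δ = I − Â`
with ordered eigenvalues `0 = λ₀ ≤ … ≤ λ_{n−1}` (spectral decomposition `Δ = Q Λ Qᵀ`),
and let `W` be symmetric with ordered eigenvalues `μ₀ ≤ … ≤ μ_{d−1}`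
(spectral decomposition `W = P M Pᵀ`). If `|μ₀| (λ_{n−1} − 1) > μ_{d−1}`, then for
Lebesgue-almost every nonzero initial condition `F₀`, any solution of `Ḟ = Â F W` on
`[0,∞)` with `F(0) = F₀` never vanishes and its normalized Dirichlet energy
`trace(Fᵀ Δ F)/‖F‖_F²` converges to `λ_{n−1}`: the dynamics is HFD. -/
theorem hfd_dynamics {n d : ℕ} (hn : 2 ≤ n) (hd : 0 < d)
    (G : SimpleGraph (Fin n)) [DecidableRel G.Adj]
    (Ahat Δ : Matrix (Fin n) (Fin n) ℝ)
    (hAhat : Ahat =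
      Matrix.diagonal (fun i => (Real.sqrt (G.degree i))⁻¹) * G.adjMatrix ℝ *
        Matrix.diagonal (fun i => (Real.sqrt (G.degree i))⁻¹))
    (hΔ : Δ = 1 - Ahat)
    (lam : Fin n → ℝ) (hlam_mono : Monotone lam) (hlam0 : lam ⟨0, by omega⟩ = 0)
    (Q : Matrix (Fin n) (Fin n) ℝ) (hQorth : Qᵀ * Q = 1 ∧ Q * Qᵀ = 1)
    (hΔspec : Δ = Q * Matrix.diagonal lam * Qᵀ)
    (W : Matrix (Fin d) (Fin d) ℝ)
    (mu : Fin d → ℝ) (hmu_mono : Monotone mu)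
    (P : Matrix (Fin d) (Fin d) ℝ) (hPorth : Pᵀ * P = 1 ∧ P * Pᵀ = 1)
    (hWspec : W = P * Matrix.diagonal mu * Pᵀ)
    (hcond : |mu ⟨0, hd⟩| * (lam ⟨n - 1, by omega⟩ - 1) > mu ⟨d - 1, by omega⟩) :
    ∀ᵐ f : Fin n → Fin d → ℝ,
      Matrix.of f ≠ 0 →
      ∀ F : ℝ → Matrix (Fin n) (Fin d) ℝ,
        F 0 = Matrix.of f →
        (∀ t : ℝ, 0 ≤ t → HasDerivWithinAt F (Ahat * F t * W) (Set.Ici 0) t) →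
        (∀ t : ℝ, 0 ≤ t → F t ≠ 0) ∧
        Tendsto
          (fun t : ℝ => ((F t)ᵀ * Δ * F t).trace / ∑ i : Fin n, ∑ j : Fin d, (F t i j) ^ 2)
          atTop (nhds (lam ⟨n - 1, by omega⟩)) := by
  obtain ⟨hQQ, hQQ'⟩ := hQorth
  obtain ⟨hPP, hPP'⟩ := hPorth
  set imax : Fin n := ⟨n - 1, by omega⟩
  set jmin : Fin d := ⟨0, hd⟩
  have hΔG : 1 - G.normalizedAdjMatrix = Q * diagonal lam * Qᵀ := by
    rw [← hΔspec, hΔ, hAhat]; rfl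
  have hlam_le : ∀ i, lam i ≤ lam imax := fun i => hlam_mono (Nat.le_sub_one_of_lt i.isLt)
  have hlam_gt_one : 1 < lam imax :=
    G.one_lt_eigenvalue_of_one_sub_normalizedAdjMatrix_eq hQQ hΔG hlam0 hlam_le
  have hlam_le_two : lam imax ≤ 2 :=
    G.eigenvalue_le_two_of_one_sub_normalizedAdjMatrix_eq hQQ hΔG imax
  have hrate (i : Fin n) (j : Fin d) := one_sub_mul_le_of_abs_mul_sub_one_gt
    (hlam0 ▸ hlam_mono (Nat.zero_le i)) (hlam_le i) hlam_gt_one hlam_le_two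
    (hmu_mono (Nat.zero_le j)) (hmu_mono (Nat.le_sub_one_of_lt j.isLt)) hcond
  have hQA : Qᵀ * Ahat = diagonal (fun i => 1 - lam i) * Qᵀ := by
    simpa [hΔ] using transpose_mul_one_sub_eq_diagonal_mul_transpose hQQ hΔspec
  have hWP : W * P = P * diagonal mu := by rw [hWspec, Matrix.mul_assoc, hPP, Matrix.mul_one]
  filter_upwards [ae_transpose_mul_of_mul_apply_ne_zero hQQ hPP imax jmin] with f hf _ F hF0 hF
  have hmode := fun t (ht : 0 ≤ t) => mul_mul_apply_eq_exp_of_hasDerivWithinAt hQA hWP hF ht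
  simp only [hF0] at hmode
  refine ⟨fun t ht hFt => hf ?_, ?_⟩
  · simpa [hFt] using hmode t ht imax jmin
  · refine (tendsto_sum_mul_sq_exp_div_sum_sq_exp (ι := Fin n × Fin d)
      (a := fun p => (1 - lam p.1) * mu p.2) (c := fun p => (Qᵀ * of f * P) p.1 p.2)
      (w := fun p => lam p.1) (k := (imax, jmin)) hf (fun p => (hrate p.1 p.2).1)
      (fun p => (hrate p.1 p.2).2)).congr' ?_
    filter_upwards [eventually_ge_atTop 0] with t ht
    rw [hΔspec, trace_transpose_mul_conj_diagonal_mul hPP', ← sum_sq_transpose_mul_mul hQQ' hPP']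
    simp only [hmode t ht, Fintype.sum_prod_type]
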